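/- arXiv:2504.20408 — 2 statements merged into one kernel-verified Lean document; each statement's English description precedes it below -/
import Mathlib

section
/- Let d ≥ 1 and let G : ℤ^d × ℤ^d → ℂ satisfy G(l,m) → 0 as max(‖l‖_∞, ‖m‖_∞) → ∞ (i.e., for every ε > 0 there is K such that |G(l,m)| < ε whenever ‖l‖_∞ > K or ‖m‖_∞ > K). Then for every ε > 0 there exist M ∈ ℕ and finitely supported functions α_t, β_t, γ_t : ℤ^d → ℂ (1 ≤ t ≤ M) such that, setting G^fast(l,m) := Σ_{t=1}^{M} γ_t(l+m) α_t(l) β_t(m), for every a : ℤ^d → ℂ with Σ_{n∈ℤ^d} |a_n| < ∞ one has (Σ_{k∈ℤ^d} | Σ_{l+m=k} ((G(l,m) − G(m,m)) − (G^fast(l,m) − G^fast(m,m))) a_l a_m |²)^{1/2} ≤ ε (Σ_{n∈ℤ^d} |a_n|)². -/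
/-!
Truncating `G` to a large box `B × B` gives a kernel that is a finite sum of products of
point masses, hence of the required low-rank form, and off the box `|G| < ε / 2` by decay. So
the kernel `H(l, m) = (G − G^fast)(l, m) − (G − G^fast)(m, m)` is bounded by `ε`. For any kernel
with `|H| ≤ C`, the `k`-th coefficient is bounded by `C (|a| ∗ |a|)_k`, and
`‖c‖_{ℓ²} ≤ ‖c‖_{ℓ¹} ≤ C ‖|a| ∗ |a|‖_{ℓ¹} = C ‖a‖_{ℓ¹}²`.
-/

open Function

variable {A : Type*}

section LowRank

variable {R : Type*} [Semiring R] [Add A]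

/-- The paper's `G^fast`. -/
def lowRankKernel {M : ℕ} (α β γ : Fin M → A → R) (l m : A) : R :=
  ∑ t, γ t (l + m) * α t l * β t m

theorem exists_lowRankKernel_eq_ite [DecidableEq A] (S : Finset (A × A)) (G : A → A → R) :
    ∃ (M : ℕ) (α β γ : Fin M → A → R),
      (∀ t, (support (α t)).Finite) ∧ (∀ t, (support (β t)).Finite) ∧
      (∀ t, (support (γ t)).Finite) ∧
      ∀ l m, lowRankKernel α β γ l m = if (l, m) ∈ S then G l m else 0 := by
  let p : Fin S.card → A × A := fun t => S.equivFin.symm t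
  refine ⟨S.card, fun t => Pi.single (p t).1 1, fun t => Pi.single (p t).2 1,
    fun t => Pi.single ((p t).1 + (p t).2) (G (p t).1 (p t).2),
    fun t => (Set.finite_singleton _).subset Pi.support_single_subset,
    fun t => (Set.finite_singleton _).subset Pi.support_single_subset,
    fun t => (Set.finite_singleton _).subset Pi.support_single_subset, fun l m => ?_⟩
  have hterm : ∀ s : A × A, (Pi.single (s.1 + s.2) (G s.1 s.2) : A → R) (l + m) *
      (Pi.single s.1 1 : A → R) l * (Pi.single s.2 1 : A → R) m =
        if (l, m) = s then G l m else 0 := by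
    rintro ⟨l', m'⟩
    by_cases hl : l = l' <;> by_cases hm : m = m' <;> simp [hl, hm]
  calc lowRankKernel _ _ _ l m = ∑ t, if (l, m) = p t then G l m else 0 :=
        Finset.sum_congr rfl fun t _ => hterm (p t)
    _ = ∑ s : S, if (l, m) = s then G l m else 0 :=
        S.equivFin.symm.sum_comp (fun s : S => if (l, m) = (s : A × A) then G l m else 0)
    _ = _ := by rw [Finset.sum_coe_sort S (fun s => if (l, m) = s then G l m else 0),
      Finset.sum_ite_eq]

end LowRank

section Convolution

variable [AddCommGroup A] {u v : A → ℝ}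

theorem hasSum_prod_mul_sub (hu₀ : ∀ n, 0 ≤ u n) (hv₀ : ∀ n, 0 ≤ v n) (hu : Summable u)
    (hv : Summable v) :
    HasSum (fun p : A × A => u p.2 * v (p.1 - p.2)) ((∑' n, u n) * ∑' n, v n) := by
  let e : A × A ≃ A × A :=
    (Equiv.prodComm A A).trans (Equiv.prodShear (Equiv.refl A) Equiv.subRight)
  have hprod := hu.mul_of_nonneg hv hu₀ hv₀
  rw [hu.tsum_mul_tsum hv hprod]
  exact (e.hasSum_iff (f := fun p : A × A => u p.1 * v p.2)).2 hprod.hasSum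

theorem hasSum_tsum_mul_sub (hu₀ : ∀ n, 0 ≤ u n) (hv₀ : ∀ n, 0 ≤ v n) (hu : Summable u)
    (hv : Summable v) :
    HasSum (fun k => ∑' l, u l * v (k - l)) ((∑' n, u n) * ∑' n, v n) := by
  have h := hasSum_prod_mul_sub hu₀ hv₀ hu hv
  exact h.summable.prod.hasSum_iff.2 (h.summable.tsum_prod.symm.trans h.tsum_eq)

theorem tsum_sq_le_sq_tsum {ι : Type*} {x : ι → ℝ} (hx₀ : ∀ i, 0 ≤ x i) (hx : Summable x) :
    ∑' i, x i ^ 2 ≤ (∑' i, x i) ^ 2 := by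
  have hle : ∀ i, x i ^ 2 ≤ (∑' j, x j) * x i := fun i => by
    rw [sq]; exact mul_le_mul_of_nonneg_right (hx.le_tsum i fun j _ => hx₀ j) (hx₀ i)
  calc ∑' i, x i ^ 2 ≤ ∑' i, (∑' j, x j) * x i :=
        Summable.tsum_le_tsum hle
          ((hx.mul_left _).of_nonneg_of_le (fun i => sq_nonneg _) hle) (hx.mul_left _)
    _ = _ := by rw [tsum_mul_left, sq]

theorem sqrt_tsum_norm_sq_le {R : Type*} [SeminormedRing R] {H : A → A → R} {C : ℝ}
    (hH : ∀ l m, ‖H l m‖ ≤ C) {a : A → R} (ha : Summable fun n => ‖a n‖) :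
    √(∑' k, ‖∑' l, H l (k - l) * a l * a (k - l)‖ ^ 2) ≤ C * (∑' n, ‖a n‖) ^ 2 := by
  have hC : 0 ≤ C := (norm_nonneg _).trans (hH 0 0)
  have ha₀ : ∀ n, 0 ≤ ‖a n‖ := fun n => norm_nonneg _
  have hf : HasSum (fun k => ∑' l, ‖a l‖ * ‖a (k - l)‖) ((∑' n, ‖a n‖) ^ 2) := by
    rw [sq]
    exact hasSum_tsum_mul_sub (u := fun n => ‖a n‖) (v := fun n => ‖a n‖) ha₀ ha₀ ha ha
  have hfiber : ∀ k, Summable fun l => ‖a l‖ * ‖a (k - l)‖ :=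
    (hasSum_prod_mul_sub (u := fun n => ‖a n‖) (v := fun n => ‖a n‖) ha₀ ha₀ ha ha).summable
      |>.prod_factor
  have hterm : ∀ k l, ‖H l (k - l) * a l * a (k - l)‖ ≤ C * (‖a l‖ * ‖a (k - l)‖) := fun k l =>
    calc ‖H l (k - l) * a l * a (k - l)‖ ≤ ‖H l (k - l)‖ * ‖a l‖ * ‖a (k - l)‖ := norm_mul₃_le
      _ ≤ C * ‖a l‖ * ‖a (k - l)‖ := by gcongr; exact hH _ _
      _ = C * (‖a l‖ * ‖a (k - l)‖) := mul_assoc _ _ _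
  have hconv : ∀ k, ‖∑' l, H l (k - l) * a l * a (k - l)‖ ≤
      C * ∑' l, ‖a l‖ * ‖a (k - l)‖ := fun k => by
    have hnorm := ((hfiber k).mul_left C).of_nonneg_of_le (fun l => norm_nonneg _) (hterm k)
    calc _ ≤ ∑' l, ‖H l (k - l) * a l * a (k - l)‖ := norm_tsum_le_tsum_norm hnorm
      _ ≤ ∑' l, C * (‖a l‖ * ‖a (k - l)‖) :=
          hnorm.tsum_le_tsum (hterm k) ((hfiber k).mul_left C)
      _ = _ := tsum_mul_left
  have hsum : Summable fun k => ‖∑' l, H l (k - l) * a l * a (k - l)‖ :=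
    (hf.summable.mul_left C).of_nonneg_of_le (fun k => norm_nonneg _) hconv
  have hle : ∑' k, ‖∑' l, H l (k - l) * a l * a (k - l)‖ ≤ C * (∑' n, ‖a n‖) ^ 2 := by
    rw [← hf.tsum_eq, ← tsum_mul_left]
    exact hsum.tsum_le_tsum hconv (hf.summable.mul_left C)
  rw [Real.sqrt_le_iff]
  refine ⟨by positivity, (tsum_sq_le_sq_tsum (fun k => norm_nonneg _) hsum).trans ?_⟩
  exact pow_le_pow_left₀ (tsum_nonneg fun k => norm_nonneg _) hle 2

end Convolution

theorem statement0_general (d : ℕ)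
    (G : (Fin d → ℤ) → (Fin d → ℤ) → ℂ)
    (hG : ∀ ε > (0 : ℝ), ∃ K : ℝ, ∀ l m : Fin d → ℤ,
      (‖l‖ > K ∨ ‖m‖ > K) → ‖G l m‖ < ε) :
    ∀ ε > (0 : ℝ), ∃ (M : ℕ) (α β γ : Fin M → (Fin d → ℤ) → ℂ),
      (∀ t, (Function.support (α t)).Finite) ∧
      (∀ t, (Function.support (β t)).Finite) ∧
      (∀ t, (Function.support (γ t)).Finite) ∧
      ∀ a : (Fin d → ℤ) → ℂ, Summable (fun n => ‖a n‖) →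
        Real.sqrt (∑' k : Fin d → ℤ, ‖∑' l : Fin d → ℤ,
            ((G l (k - l) - G (k - l) (k - l)) -
              ((∑ t, γ t (l + (k - l)) * α t l * β t (k - l)) -
                (∑ t, γ t ((k - l) + (k - l)) * α t (k - l) * β t (k - l))))
              * a l * a (k - l)‖ ^ 2)
          ≤ ε * (∑' n : Fin d → ℤ, ‖a n‖) ^ 2 := by
  intro ε hε
  obtain ⟨K, hK⟩ := hG (ε / 2) (by positivity)
  have hbox : (Metric.closedBall (0 : Fin d → ℤ) K).Finite :=
    (isCompact_closedBall 0 K).finite_of_discrete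
  obtain ⟨M, α, β, γ, hα, hβ, hγ, hfast⟩ :=
    exists_lowRankKernel_eq_ite (hbox.toFinset ×ˢ hbox.toFinset) G
  refine ⟨M, α, β, γ, hα, hβ, hγ, fun a ha => ?_⟩
  have herr : ∀ l m, ‖G l m - lowRankKernel α β γ l m‖ ≤ ε / 2 := fun l m => by
    rw [hfast]
    split_ifs with hlm
    · simpa using (half_pos hε).le
    · simp only [Finset.mem_product, Set.Finite.mem_toFinset, mem_closedBall_zero_iff,
        not_and_or, not_le] at hlm
      simpa using (hK l m hlm).le
  refine sqrt_tsum_norm_sq_le (H := fun l m =>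
    (G l m - G m m) - (lowRankKernel α β γ l m - lowRankKernel α β γ m m)) (fun l m => ?_) ha
  calc _ = ‖(G l m - lowRankKernel α β γ l m) - (G m m - lowRankKernel α β γ m m)‖ := by
        rw [sub_sub_sub_comm]
    _ ≤ ε / 2 + ε / 2 := (norm_sub_le _ _).trans (add_le_add (herr l m) (herr m m))
    _ = ε := add_halves ε

/-- (Lemma 3.2 of the paper, Fourier-coefficient form.)
If the kernel modes `G(l,m)` tend to `0` as `max(‖l‖_∞, ‖m‖_∞) → ∞`, then for every
`ε > 0` there are `M ∈ ℕ` and finitely supported `α_t, β_t, γ_t : ℤ^d → ℂ`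
(`1 ≤ t ≤ M`) such that, with `G^fast(l,m) := Σ_t γ_t(l+m) α_t(l) β_t(m)`, for every
absolutely summable `a : ℤ^d → ℂ` one has
`(Σ_k |Σ_{l+m=k} ((G(l,m) − G(m,m)) − (G^fast(l,m) − G^fast(m,m))) a_l a_m|²)^{1/2}
  ≤ ε (Σ_n |a_n|)²`. -/
theorem statement0 (d : ℕ) (hd : 1 ≤ d)
    (G : (Fin d → ℤ) → (Fin d → ℤ) → ℂ)
    (hG : ∀ ε > (0 : ℝ), ∃ K : ℝ, ∀ l m : Fin d → ℤ,
      (‖l‖ > K ∨ ‖m‖ > K) → ‖G l m‖ < ε) :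
    ∀ ε > (0 : ℝ), ∃ (M : ℕ) (α β γ : Fin M → (Fin d → ℤ) → ℂ),
      (∀ t, (Function.support (α t)).Finite) ∧
      (∀ t, (Function.support (β t)).Finite) ∧
      (∀ t, (Function.support (γ t)).Finite) ∧
      ∀ a : (Fin d → ℤ) → ℂ, Summable (fun n => ‖a n‖) →
        Real.sqrt (∑' k : Fin d → ℤ, ‖∑' l : Fin d → ℤ,
            ((G l (k - l) - G (k - l) (k - l)) -
              ((∑ t, γ t (l + (k - l)) * α t l * β t (k - l)) -
                (∑ t, γ t ((k - l) + (k - l)) * α t (k - l) * β t (k - l))))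
              * a l * a (k - l)‖ ^ 2)
          ≤ ε * (∑' n : Fin d → ℤ, ‖a n‖) ^ 2 :=
  statement0_general d G hG
end

section
/- Let d ≥ 1, δ ∈ (0,1), and let α, α', β, β', γ, γ', a : ℤ^d → ℂ with ‖α‖_{ℓ²}, ‖α'‖_{ℓ²}, ‖β‖_{ℓ²}, ‖β'‖_{ℓ²}, ‖a‖_{ℓ²} < ∞ and ‖γ‖_{ℓ⁴}, ‖γ'‖_{ℓ⁴} < ∞. Assume ‖α − α'‖_{ℓ²} < δ, ‖β − β'‖_{ℓ²} < δ, and ‖γ − γ'‖_{ℓ⁴} < δ. Set ζ := (α·a)*(β·a), ζ' := (α'·a)*(β'·a), A := ‖γ‖_{ℓ⁴}(1 + ‖α‖_{ℓ²} + ‖β‖_{ℓ²}), and B := (1 + ‖α‖_{ℓ²})(1 + ‖β‖_{ℓ²})(1 + ‖γ‖_{ℓ⁴}). Then ‖γ·ζ − γ'·ζ'‖_{ℓ²} ≤ δ (A + B) ‖a‖_{ℓ²}². -/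
open scoped BigOperators

/-- The `ℓ²` norm of a function on `ℤ^d` (defined via `tsum`). -/
noncomputable def l2Norm {d : ℕ} (f : (Fin d → ℤ) → ℂ) : ℝ :=
  Real.sqrt (∑' k : Fin d → ℤ, ‖f k‖ ^ 2)

/-- The `ℓ⁴` norm of a function on `ℤ^d` (defined via `tsum`). -/
noncomputable def l4Norm {d : ℕ} (f : (Fin d → ℤ) → ℂ) : ℝ :=
  (∑' k : Fin d → ℤ, ‖f k‖ ^ 4) ^ ((1 : ℝ) / 4)

/-- Discrete convolution on `ℤ^d`: `(f * g)_k = Σ_l f_l g_{k−l}`. -/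
noncomputable def zConv {d : ℕ} (f g : (Fin d → ℤ) → ℂ) : (Fin d → ℤ) → ℂ :=
  fun k => ∑' l : Fin d → ℤ, f l * g (k - l)

/-!
Write `γζ - γ'ζ' = γ(ζ - ζ') + (γ - γ')ζ'` and, by bilinearity of the convolution,
`ζ - ζ' = ((α - α')a) * (βa) + (α'a) * ((β - β')a)`. Products are estimated in `ℓ²` by Hölder,
`‖uv‖₂ ≤ ‖u‖₄ ‖v‖₄ ≤ ‖u‖₄ ‖v‖₁`, convolutions in `ℓ¹` by Young, `‖f * g‖₁ ≤ ‖f‖₁ ‖g‖₁`, and the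
factors `αa` by Cauchy–Schwarz, `‖αa‖₁ ≤ ‖α‖₂ ‖a‖₂`. Since `δ < 1`, `‖α'‖₂ ≤ 1 + ‖α‖₂` and
`‖β'‖₂ ≤ 1 + ‖β‖₂`, so the total is at most `δ (A + (1 + ‖α‖₂)(1 + ‖β‖₂)) ‖a‖₂² ≤ δ (A + B) ‖a‖₂²`.
The `ℓᵖ` norms are the `Lᵖ` seminorms for the counting measure on `ℤ^d`, so Mathlib's Hölder and
Minkowski inequalities apply.
-/

open MeasureTheory ENNReal
open MeasureTheory.Measure (count)

instance ENNReal.holderTriple_four_four_two : HolderTriple 4 4 2 := by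
  rw [holderTriple_iff, ← two_mul, show (4 : ℝ≥0∞) = 2 * 2 by norm_num,
    ENNReal.mul_inv (by simp) (by simp), ← mul_assoc, ENNReal.mul_inv_cancel (by simp) (by simp),
    one_mul]

section CountingMeasure

variable {ι E : Type*} [MeasurableSpace ι] [MeasurableSingletonClass ι] [NormedAddCommGroup E]

lemma eLpNorm_count_eq_tsum {p : ℝ≥0∞} (hp0 : p ≠ 0) (hp : p ≠ ∞) (f : ι → E) :
    eLpNorm f p count = (∑' k, ‖f k‖ₑ ^ p.toReal) ^ (1 / p.toReal) := by
  rw [eLpNorm_eq_lintegral_rpow_enorm_toReal hp0 hp, lintegral_count]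

lemma eLpNorm_one_count (f : ι → E) : eLpNorm f 1 count = ∑' k, ‖f k‖ₑ := by
  rw [eLpNorm_one_eq_lintegral_enorm, lintegral_count]

lemma eLpNorm_count_le_eLpNorm_one {p : ℝ≥0∞} (hp : 1 ≤ p) (f : ι → E) :
    eLpNorm f p count ≤ eLpNorm f 1 count := by
  set S := eLpNorm f 1 count
  have hle : ∀ k, ‖f k‖ₑ ≤ S := fun k => enorm_le_eLpNorm_count f k one_ne_zero
  rcases eq_or_ne p ∞ with rfl | hp_top
  · simpa using hle
  have hr : 1 ≤ p.toReal := by simpa using ENNReal.toReal_mono hp_top hp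
  have split : ∀ x : ℝ≥0∞, x ^ p.toReal = x * x ^ (p.toReal - 1) := fun x => by
    conv_lhs => rw [← add_sub_cancel 1 p.toReal,
      ENNReal.rpow_add_of_nonneg _ _ zero_le_one (by linarith), ENNReal.rpow_one]
  calc eLpNorm f p count = (∑' k, ‖f k‖ₑ * ‖f k‖ₑ ^ (p.toReal - 1)) ^ (1 / p.toReal) := by
        simp only [eLpNorm_count_eq_tsum (zero_lt_one.trans_le hp).ne' hp_top, split]
    _ ≤ (∑' k, ‖f k‖ₑ * S ^ (p.toReal - 1)) ^ (1 / p.toReal) := by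
        gcongr with k
        exact hle k
    _ = S := by
        rw [ENNReal.tsum_mul_right, ← eLpNorm_one_count, ← split, ← ENNReal.rpow_mul,
          mul_one_div_cancel (by positivity), ENNReal.rpow_one]

variable [Countable ι]

-- Both sides vanish when the series diverges.
lemma lpNorm_count_natCast_eq {n : ℕ} (hn : n ≠ 0) (f : ι → E) :
    lpNorm f n count = (∑' k, ‖f k‖ ^ n) ^ (1 / n : ℝ) := by
  rw [← toReal_eLpNorm .of_discrete, eLpNorm_count_eq_tsum (by simpa) (by simp),
    ← ENNReal.toReal_rpow, ENNReal.tsum_toReal_eq fun k => by finiteness]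
  simp

lemma memLp_count_of_summable {n : ℕ} (hn : n ≠ 0) {f : ι → E}
    (hf : Summable fun k => ‖f k‖ ^ n) : MemLp f n count := by
  refine (integrable_norm_rpow_iff .of_discrete (by simpa) (by simp)).1
    (integrable_count_iff.2 ?_)
  simpa using hf

lemma eLpNorm_count_mul_le_mul_eLpNorm {𝕜 : Type*} [NormedRing 𝕜] {p q r : ℝ≥0∞}
    [HolderTriple p q r] (u v : ι → 𝕜) :
    eLpNorm (u * v) r count ≤ eLpNorm u p count * eLpNorm v q count :=
  eLpNorm_smul_le_mul_eLpNorm (f := v) (φ := u) .of_discrete .of_discrete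

lemma eLpNorm_mul_sub_mul_le {𝕜 : Type*} [NormedCommRing 𝕜] (γ γ' ζ ζ' : ι → 𝕜) :
    eLpNorm (γ * ζ - γ' * ζ') 2 count ≤
      eLpNorm γ 4 count * eLpNorm (ζ - ζ') 1 count
        + eLpNorm (γ - γ') 4 count * eLpNorm ζ' 1 count := by
  have holder : ∀ u v : ι → 𝕜, eLpNorm (u * v) 2 count ≤ eLpNorm u 4 count * eLpNorm v 1 count :=
    fun u v => calc
      eLpNorm (u * v) 2 count ≤ eLpNorm u 4 count * eLpNorm v 4 count :=
        eLpNorm_count_mul_le_mul_eLpNorm u v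
      _ ≤ eLpNorm u 4 count * eLpNorm v 1 count := by
        gcongr; exact eLpNorm_count_le_eLpNorm_one (by norm_num) v
  calc eLpNorm (γ * ζ - γ' * ζ') 2 count
      = eLpNorm (γ * (ζ - ζ') + (γ - γ') * ζ') 2 count := by congr 1; ring
    _ ≤ eLpNorm (γ * (ζ - ζ')) 2 count + eLpNorm ((γ - γ') * ζ') 2 count :=
        eLpNorm_add_le .of_discrete .of_discrete one_le_two
    _ ≤ _ := add_le_add (holder _ _) (holder _ _)

end CountingMeasure

section Convolution

variable {d : ℕ}

lemma summable_mul_comp_sub {f g : (Fin d → ℤ) → ℂ} (hf : Integrable f count)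
    (hg : Integrable g count) (k : Fin d → ℤ) : Summable fun l => f l * g (k - l) := by
  rw [integrable_count_iff] at hf hg
  refine Summable.of_norm <| (hf.mul_right (∑' m, ‖g m‖)).of_nonneg_of_le
    (fun _ => norm_nonneg _) fun l => ?_
  rw [norm_mul]
  gcongr
  exact hg.le_tsum (k - l) fun _ _ => norm_nonneg _

lemma zConv_sub_zConv {f f' g g' : (Fin d → ℤ) → ℂ} (hf : Integrable f count)
    (hf' : Integrable f' count) (hg : Integrable g count) (hg' : Integrable g' count) :
    zConv f g - zConv f' g' = zConv (f - f') g + zConv f' (g - g') := by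
  ext k
  have hfg : Summable fun l => (f l - f' l) * g (k - l) :=
    summable_mul_comp_sub (hf.sub hf') hg k
  have hfg' : Summable fun l => f' l * (g (k - l) - g' (k - l)) :=
    summable_mul_comp_sub hf' (hg.sub hg') k
  simp only [zConv, Pi.sub_apply, Pi.add_apply]
  rw [← (summable_mul_comp_sub hf hg k).tsum_sub (summable_mul_comp_sub hf' hg' k),
    ← hfg.tsum_add hfg']
  exact tsum_congr fun l => by ring

lemma eLpNorm_zConv_le (f g : (Fin d → ℤ) → ℂ) :
    eLpNorm (zConv f g) 1 count ≤ eLpNorm f 1 count * eLpNorm g 1 count := by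
  simp only [eLpNorm_one_count]
  calc ∑' k, ‖zConv f g k‖ₑ ≤ ∑' k, ∑' l, ‖f l‖ₑ * ‖g (k - l)‖ₑ :=
        ENNReal.tsum_le_tsum fun k => enorm_tsum_le_tsum_enorm.trans_eq (by simp [enorm_mul])
    _ = ∑' l, ∑' k, ‖f l‖ₑ * ‖g (k - l)‖ₑ := ENNReal.tsum_comm
    _ = ∑' l, ‖f l‖ₑ * ∑' k, ‖g k‖ₑ := by
        congr with l
        rw [ENNReal.tsum_mul_left]
        exact congrArg _ ((Equiv.subRight l).tsum_eq (‖g ·‖ₑ))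
    _ = (∑' k, ‖f k‖ₑ) * ∑' k, ‖g k‖ₑ := ENNReal.tsum_mul_right

lemma eLpNorm_mul_zConv_sub_le {α α' β β' a : (Fin d → ℤ) → ℂ} (γ γ' : (Fin d → ℤ) → ℂ)
    (hα : MemLp α 2 count) (hα' : MemLp α' 2 count) (hβ : MemLp β 2 count)
    (hβ' : MemLp β' 2 count) (ha : MemLp a 2 count) :
    eLpNorm (γ * zConv (α * a) (β * a) - γ' * zConv (α' * a) (β' * a)) 2 count ≤
      (eLpNorm γ 4 count * (eLpNorm (α - α') 2 count * eLpNorm β 2 count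
          + eLpNorm α' 2 count * eLpNorm (β - β') 2 count)
        + eLpNorm (γ - γ') 4 count * (eLpNorm α' 2 count * eLpNorm β' 2 count))
        * eLpNorm a 2 count ^ 2 := by
  have hint : ∀ {u}, MemLp u 2 count → Integrable (u * a) count :=
    fun hu => memLp_one_iff_integrable.1 (ha.mul hu)
  have cs : ∀ u, eLpNorm (u * a) 1 count ≤ eLpNorm u 2 count * eLpNorm a 2 count :=
    fun u => eLpNorm_count_mul_le_mul_eLpNorm u a
  have hdiff : eLpNorm (zConv (α * a) (β * a) - zConv (α' * a) (β' * a)) 1 count ≤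
      eLpNorm ((α - α') * a) 1 count * eLpNorm (β * a) 1 count
        + eLpNorm (α' * a) 1 count * eLpNorm ((β - β') * a) 1 count := by
    rw [zConv_sub_zConv (hint hα) (hint hα') (hint hβ) (hint hβ'), ← sub_mul, ← sub_mul]
    exact (eLpNorm_add_le .of_discrete .of_discrete le_rfl).trans
      (add_le_add (eLpNorm_zConv_le _ _) (eLpNorm_zConv_le _ _))
  calc _ ≤ eLpNorm γ 4 count * eLpNorm (zConv (α * a) (β * a) - zConv (α' * a) (β' * a)) 1 count
        + eLpNorm (γ - γ') 4 count * eLpNorm (zConv (α' * a) (β' * a)) 1 count :=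
        eLpNorm_mul_sub_mul_le _ _ _ _
    _ ≤ eLpNorm γ 4 count * (eLpNorm ((α - α') * a) 1 count * eLpNorm (β * a) 1 count
          + eLpNorm (α' * a) 1 count * eLpNorm ((β - β') * a) 1 count)
        + eLpNorm (γ - γ') 4 count * (eLpNorm (α' * a) 1 count * eLpNorm (β' * a) 1 count) :=
        add_le_add (mul_le_mul_right hdiff _) (mul_le_mul_right (eLpNorm_zConv_le _ _) _)
    _ ≤ eLpNorm γ 4 count * (eLpNorm (α - α') 2 count * eLpNorm a 2 count
            * (eLpNorm β 2 count * eLpNorm a 2 count)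
          + eLpNorm α' 2 count * eLpNorm a 2 count
            * (eLpNorm (β - β') 2 count * eLpNorm a 2 count))
        + eLpNorm (γ - γ') 4 count * (eLpNorm α' 2 count * eLpNorm a 2 count
            * (eLpNorm β' 2 count * eLpNorm a 2 count)) := by
        gcongr <;> exact cs _
    _ = _ := by ring

lemma lpNorm_mul_zConv_sub_le {α α' β β' γ γ' a : (Fin d → ℤ) → ℂ}
    (hα : MemLp α 2 count) (hα' : MemLp α' 2 count) (hβ : MemLp β 2 count)
    (hβ' : MemLp β' 2 count) (ha : MemLp a 2 count) (hγ : MemLp γ 4 count)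
    (hγ' : MemLp γ' 4 count) :
    lpNorm (γ * zConv (α * a) (β * a) - γ' * zConv (α' * a) (β' * a)) 2 count ≤
      (lpNorm γ 4 count * (lpNorm (α - α') 2 count * lpNorm β 2 count
          + lpNorm α' 2 count * lpNorm (β - β') 2 count)
        + lpNorm (γ - γ') 4 count * (lpNorm α' 2 count * lpNorm β' 2 count))
        * lpNorm a 2 count ^ 2 := by
  have key := eLpNorm_mul_zConv_sub_le γ γ' hα hα' hβ hβ' ha
  rw [← ofReal_lpNorm hγ, ← ofReal_lpNorm (hγ.sub hγ'), ← ofReal_lpNorm (hα.sub hα'),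
    ← ofReal_lpNorm (hβ.sub hβ'), ← ofReal_lpNorm hα', ← ofReal_lpNorm hβ,
    ← ofReal_lpNorm hβ', ← ofReal_lpNorm ha] at key
  rw [← toReal_eLpNorm .of_discrete]
  simpa (disch := finiteness) only [toReal_add, toReal_mul, toReal_pow,
    toReal_ofReal lpNorm_nonneg] using toReal_mono (by finiteness) key

end Convolution

lemma l2Norm_eq_lpNorm {d : ℕ} (f : (Fin d → ℤ) → ℂ) : l2Norm f = lpNorm f 2 count := by
  simpa [l2Norm, Real.sqrt_eq_rpow] using (lpNorm_count_natCast_eq two_ne_zero f).symm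

lemma l4Norm_eq_lpNorm {d : ℕ} (f : (Fin d → ℤ) → ℂ) : l4Norm f = lpNorm f 4 count := by
  simpa [l4Norm] using (lpNorm_count_natCast_eq four_ne_zero f).symm

theorem statement6_general (d : ℕ) (δ : ℝ) (hδ0 : 0 < δ) (hδ1 : δ < 1)
    (α α' β β' γ γ' a : (Fin d → ℤ) → ℂ)
    (hα : Summable fun k => ‖α k‖ ^ 2)
    (hα' : Summable fun k => ‖α' k‖ ^ 2)
    (hβ : Summable fun k => ‖β k‖ ^ 2)
    (hβ' : Summable fun k => ‖β' k‖ ^ 2)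
    (ha : Summable fun k => ‖a k‖ ^ 2)
    (hγ : Summable fun k => ‖γ k‖ ^ 4)
    (hγ' : Summable fun k => ‖γ' k‖ ^ 4)
    (hαδ : l2Norm (fun n => α n - α' n) < δ)
    (hβδ : l2Norm (fun n => β n - β' n) < δ)
    (hγδ : l4Norm (fun n => γ n - γ' n) < δ) :
    l2Norm (fun k => γ k * zConv (fun n => α n * a n) (fun n => β n * a n) k
        - γ' k * zConv (fun n => α' n * a n) (fun n => β' n * a n) k)
      ≤ δ * (l4Norm γ * (1 + l2Norm α + l2Norm β)
          + (1 + l2Norm α) * (1 + l2Norm β) * (1 + l4Norm γ)) * (l2Norm a) ^ 2 := by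
  have mem2 : ∀ {f : (Fin d → ℤ) → ℂ}, (Summable fun k => ‖f k‖ ^ 2) → MemLp f 2 count :=
    fun hf => by exact_mod_cast memLp_count_of_summable two_ne_zero hf
  have mem4 : ∀ {f : (Fin d → ℤ) → ℂ}, (Summable fun k => ‖f k‖ ^ 4) → MemLp f 4 count :=
    fun hf => by exact_mod_cast memLp_count_of_summable four_ne_zero hf
  simp only [l2Norm_eq_lpNorm, l4Norm_eq_lpNorm] at hαδ hβδ hγδ ⊢
  change lpNorm (α - α') 2 count < δ at hαδ
  change lpNorm (β - β') 2 count < δ at hβδ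
  change lpNorm (γ - γ') 4 count < δ at hγδ
  have hα'_le : lpNorm α' 2 count ≤ 1 + lpNorm α 2 count := by
    linarith [lpNorm_le_lpNorm_add_lpNorm_sub (f := α') (mem2 hα) one_le_two]
  have hβ'_le : lpNorm β' 2 count ≤ 1 + lpNorm β 2 count := by
    linarith [lpNorm_le_lpNorm_add_lpNorm_sub (f := β') (mem2 hβ) one_le_two]
  calc _ ≤ _ := lpNorm_mul_zConv_sub_le (mem2 hα) (mem2 hα') (mem2 hβ) (mem2 hβ') (mem2 ha)
        (mem4 hγ) (mem4 hγ')
    _ ≤ (lpNorm γ 4 count * (δ * lpNorm β 2 count + (1 + lpNorm α 2 count) * δ)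
        + δ * ((1 + lpNorm α 2 count) * (1 + lpNorm β 2 count))) * lpNorm a 2 count ^ 2 := by
      gcongr <;> simp [add_nonneg, mul_nonneg]
    _ = δ * (lpNorm γ 4 count * (1 + lpNorm α 2 count + lpNorm β 2 count)
        + (1 + lpNorm α 2 count) * (1 + lpNorm β 2 count) * 1) * lpNorm a 2 count ^ 2 := by
      ring
    _ ≤ _ := by
      gcongr <;> simp [add_nonneg, mul_nonneg]

/-- Single-term perturbation estimate (core of Lemma 3.3 of the
paper): with `ζ := (α·a)*(β·a)`, `ζ' := (α'·a)*(β'·a)`,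
`A := ‖γ‖_{ℓ⁴}(1 + ‖α‖_{ℓ²} + ‖β‖_{ℓ²})` and
`B := (1 + ‖α‖_{ℓ²})(1 + ‖β‖_{ℓ²})(1 + ‖γ‖_{ℓ⁴})`, if the perturbed parameters
are `δ`-close (`δ ∈ (0,1)`), then `‖γ·ζ − γ'·ζ'‖_{ℓ²} ≤ δ (A + B) ‖a‖_{ℓ²}²`. -/
theorem statement6 (d : ℕ) (hd : 1 ≤ d) (δ : ℝ) (hδ0 : 0 < δ) (hδ1 : δ < 1)
    (α α' β β' γ γ' a : (Fin d → ℤ) → ℂ)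
    (hα : Summable fun k => ‖α k‖ ^ 2)
    (hα' : Summable fun k => ‖α' k‖ ^ 2)
    (hβ : Summable fun k => ‖β k‖ ^ 2)
    (hβ' : Summable fun k => ‖β' k‖ ^ 2)
    (ha : Summable fun k => ‖a k‖ ^ 2)
    (hγ : Summable fun k => ‖γ k‖ ^ 4)
    (hγ' : Summable fun k => ‖γ' k‖ ^ 4)
    (hαδ : l2Norm (fun n => α n - α' n) < δ)
    (hβδ : l2Norm (fun n => β n - β' n) < δ)
    (hγδ : l4Norm (fun n => γ n - γ' n) < δ) :
    l2Norm (fun k => γ k * zConv (fun n => α n * a n) (fun n => β n * a n) k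
        - γ' k * zConv (fun n => α' n * a n) (fun n => β' n * a n) k)
      ≤ δ * (l4Norm γ * (1 + l2Norm α + l2Norm β)
          + (1 + l2Norm α) * (1 + l2Norm β) * (1 + l4Norm γ)) * (l2Norm a) ^ 2 :=
  statement6_general d δ hδ0 hδ1 α α' β β' γ γ' a hα hα' hβ hβ' ha hγ hγ' hαδ hβδ hγδ
end
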